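/- arXiv:2101.12617 — 5 statements merged into one kernel-verified Lean document; each statement's English description precedes it below -/
import Mathlib

section
/- Let g : ℝ^d → ℝ be a convex, continuously differentiable function whose gradient is L-Lipschitz, let P ⊆ ℝ^d be a compact convex set with diameter D, let x̂ ∈ P, let s ∈ P minimize ⟨∇g(x̂), ·⟩ over P, and set gap = ⟨∇g(x̂), x̂ - s⟩ and c = g(x̂) - inf_{x∈P} g(x). Then c ≤ gap, and moreover gap ≤ c + L·D²/2 if c > L·D²/2, while gap ≤ D·√(2·L·c) if c ≤ L·D²/2. -/
/-!
Convexity gives `g z ≥ g x̂ + ⟪∇g(x̂), z - x̂⟫ ≥ g x̂ - gap` for `z ∈ P`, hence `c ≤ gap`.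
Conversely, the descent lemma for a function with `L`-Lipschitz gradient, applied along the
segment `x̂ + γ (s - x̂) ⊆ P`, gives `γ · gap - γ² L D² / 2 ≤ c` for every `γ ∈ [0, 1]`; the upper
bounds on `gap` follow by taking `γ = 1`, or the maximiser `γ = gap / (L D²)` when it is `≤ 1`.
-/

open scoped RealInnerProductSpace

section Gradient

variable {E : Type*} [NormedAddCommGroup E] [InnerProductSpace ℝ E] [CompleteSpace E]
  {g : E → ℝ}

theorem HasGradientAt.hasDerivAt_comp_add_smul {G x v : E} {t : ℝ}
    (hg : HasGradientAt g G (x + t • v)) :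
    HasDerivAt (fun t : ℝ => g (x + t • v)) ⟪G, v⟫ t := by
  have hline : HasDerivAt (fun t : ℝ => x + t • v) v t := by
    simpa using ((hasDerivAt_id t).smul_const v).const_add x
  have h := (hasGradientAt_iff_hasFDerivAt.mp hg).comp_hasDerivAt t hline
  simp only [InnerProductSpace.toDual_apply_apply] at h
  exact h

theorem ConvexOn.add_inner_le_of_hasGradientAt (hconv : ConvexOn ℝ Set.univ g) {G x : E}
    (hg : HasGradientAt g G x) (y : E) : g x + ⟪G, y - x⟫ ≤ g y := by
  have hline : ConvexOn ℝ Set.univ (fun t : ℝ => g (x + t • (y - x))) := by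
    have h := hconv.comp_affineMap (AffineMap.lineMap x y)
    have heq : (g ∘ AffineMap.lineMap x y : ℝ → ℝ) = fun t : ℝ => g (x + t • (y - x)) := by
      funext t; simp [AffineMap.lineMap_apply, add_comm]
    simpa [heq] using h
  have hslope := hline.le_slope_of_hasDerivAt (Set.mem_univ 0) (Set.mem_univ 1) one_pos
    (HasGradientAt.hasDerivAt_comp_add_smul (by simpa using hg))
  simp only [slope, zero_smul, add_zero, one_smul, add_sub_cancel, sub_zero, inv_one,
    smul_eq_mul, one_mul, vsub_eq_sub] at hslope
  linarith

theorem le_add_inner_add_of_lipschitz_gradient {g' : E → E} {L : ℝ}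
    (hgrad : ∀ x, HasGradientAt g (g' x) x) (hlip : ∀ x y, ‖g' x - g' y‖ ≤ L * ‖x - y‖)
    (x y : E) : g y ≤ g x + ⟪g' x, y - x⟫ + L / 2 * ‖y - x‖ ^ 2 := by
  set v := y - x
  set φ : ℝ → ℝ := fun t => g (x + t • v) - t * ⟪g' x, v⟫ - L / 2 * t ^ 2 * ‖v‖ ^ 2
  have hφ : ∀ t, HasDerivAt φ (⟪g' (x + t • v), v⟫ - ⟪g' x, v⟫ - L * t * ‖v‖ ^ 2) t := by
    intro t
    have h := ((HasGradientAt.hasDerivAt_comp_add_smul (x := x) (v := v) (hgrad (x + t • v))).sub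
      ((hasDerivAt_id t).mul_const ⟪g' x, v⟫)).sub
      (((hasDerivAt_pow 2 t).const_mul (L / 2)).mul_const (‖v‖ ^ 2))
    exact h.congr_deriv (by simp only [one_mul]; ring)
  have hφ_nonpos : ∀ t ∈ interior (Set.Ici (0 : ℝ)),
      ⟪g' (x + t • v), v⟫ - ⟪g' x, v⟫ - L * t * ‖v‖ ^ 2 ≤ 0 := by
    intro t ht
    rw [interior_Ici, Set.mem_Ioi] at ht
    have hgv : ‖g' (x + t • v) - g' x‖ ≤ L * (t * ‖v‖) := by
      simpa [norm_smul, abs_of_pos ht] using hlip (x + t • v) x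
    calc ⟪g' (x + t • v), v⟫ - ⟪g' x, v⟫ - L * t * ‖v‖ ^ 2
        = ⟪g' (x + t • v) - g' x, v⟫ - L * t * ‖v‖ ^ 2 := by rw [inner_sub_left]
      _ ≤ ‖g' (x + t • v) - g' x‖ * ‖v‖ - L * t * ‖v‖ ^ 2 := by
          gcongr; exact real_inner_le_norm _ _
      _ ≤ L * (t * ‖v‖) * ‖v‖ - L * t * ‖v‖ ^ 2 := by gcongr
      _ = 0 := by ring
  have hanti : AntitoneOn φ (Set.Ici 0) :=
    antitoneOn_of_hasDerivWithinAt_nonpos (convex_Ici 0)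
      (fun t _ => (hφ t).continuousAt.continuousWithinAt)
      (fun t _ => (hφ t).hasDerivWithinAt) hφ_nonpos
  have h10 : φ 1 ≤ φ 0 := hanti Set.self_mem_Ici (Set.mem_Ici.2 zero_le_one) zero_le_one
  simp only [φ, v, one_smul, add_sub_cancel, zero_smul, add_zero] at h10
  linarith

theorem sub_sInf_image_le_inner_of_convexOn (hconv : ConvexOn ℝ Set.univ g)
    {P : Set E} {G x s : E} (hg : HasGradientAt g G x) (hx : x ∈ P)
    (hlmo : ∀ z ∈ P, ⟪G, s⟫ ≤ ⟪G, z⟫) :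
    g x - sInf (g '' P) ≤ ⟪G, x - s⟫ := by
  have hlower : ∀ b ∈ g '' P, g x - ⟪G, x - s⟫ ≤ b := by
    rintro _ ⟨z, hz, rfl⟩
    have hsupp := hconv.add_inner_le_of_hasGradientAt hg z
    rw [inner_sub_right] at hsupp ⊢
    linarith [hlmo z hz]
  linarith [le_csInf ((Set.nonempty_of_mem hx).image g) hlower]

theorem mul_inner_sub_sq_le_sub_sInf {g' : E → E} {P : Set E} {x s : E} {L D γ : ℝ}
    (hL : 0 ≤ L) (hgrad : ∀ x, HasGradientAt g (g' x) x) (hlip : ∀ x y, ‖g' x - g' y‖ ≤ L * ‖x - y‖)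
    (hP : Convex ℝ P) (hbdd : BddBelow (g '' P)) (hx : x ∈ P) (hs : s ∈ P)
    (hxs : ‖x - s‖ ≤ D) (hγ : γ ∈ Set.Icc (0 : ℝ) 1) :
    γ * ⟪g' x, x - s⟫ - γ ^ 2 * (L * D ^ 2) / 2 ≤ g x - sInf (g '' P) := by
  obtain ⟨hγ0, hγ1⟩ := hγ
  set y := x + γ • (s - x)
  have hyP : y ∈ P := by
    convert hP hx hs (sub_nonneg.2 hγ1) hγ0 (sub_add_cancel 1 γ) using 1
    module
  have hdesc := le_add_inner_add_of_lipschitz_gradient hgrad hlip x y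
  rw [show y - x = γ • (s - x) from add_sub_cancel_left _ _, inner_smul_right, norm_smul,
    Real.norm_eq_abs, abs_of_nonneg hγ0, mul_pow] at hdesc
  rw [← neg_sub x s, inner_neg_right, norm_neg] at hdesc
  have hnorm : ‖x - s‖ ^ 2 ≤ D ^ 2 := pow_le_pow_left₀ (norm_nonneg _) hxs 2
  have hinf : sInf (g '' P) ≤ g y := csInf_le hbdd ⟨y, hyP, rfl⟩
  linarith [mul_le_mul_of_nonneg_left hnorm (by positivity : 0 ≤ L / 2 * γ ^ 2)]

end Gradient

theorem le_sqrt_of_forall_mul_sub_sq_le {G a c : ℝ} (hca : c ≤ a / 2)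
    (h : ∀ γ ∈ Set.Icc (0 : ℝ) 1, γ * G - γ ^ 2 * a / 2 ≤ c) : G ≤ √(2 * a * c) := by
  rcases le_or_gt G 0 with hG | hG
  · exact hG.trans (Real.sqrt_nonneg _)
  have hGa : G ≤ a := by linarith [h 1 ⟨zero_le_one, le_rfl⟩]
  have ha : 0 < a := hG.trans_le hGa
  apply Real.le_sqrt_of_sq_le
  -- `γ = G / a` maximises the left-hand side.
  have hopt := h (G / a) ⟨by positivity, (div_le_one ha).2 hGa⟩
  rw [show G / a * G - (G / a) ^ 2 * a / 2 = G ^ 2 / (2 * a) by field_simp; ring,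
    div_le_iff₀ (by positivity)] at hopt
  linarith

theorem stmt_0_general {d : ℕ} (g : EuclideanSpace ℝ (Fin d) → ℝ)
    (g' : EuclideanSpace ℝ (Fin d) → EuclideanSpace ℝ (Fin d))
    (L : ℝ) (hL : 0 < L)
    (hconv : ConvexOn ℝ Set.univ g)
    (hgrad : ∀ x, HasGradientAt g (g' x) x)
    (hlip : ∀ x y, ‖g' x - g' y‖ ≤ L * ‖x - y‖)
    (P : Set (EuclideanSpace ℝ (Fin d)))
    (hPcomp : IsCompact P) (hPconv : Convex ℝ P)
    (D : ℝ) (hD : D = Metric.diam P)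
    (xh : EuclideanSpace ℝ (Fin d)) (hxh : xh ∈ P)
    (s : EuclideanSpace ℝ (Fin d)) (hs : s ∈ P)
    (hlmo : ∀ x ∈ P, ⟪g' xh, s⟫ ≤ ⟪g' xh, x⟫)
    (gap c : ℝ) (hgap : gap = ⟪g' xh, xh - s⟫)
    (hc : c = g xh - sInf (g '' P)) :
    c ≤ gap ∧
    (L * D ^ 2 / 2 < c → gap ≤ c + L * D ^ 2 / 2) ∧
    (c ≤ L * D ^ 2 / 2 → gap ≤ D * Real.sqrt (2 * L * c)) := by
  have hgcont : Continuous g :=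
    continuous_iff_continuousAt.2 fun x => (hgrad x).differentiableAt.continuousAt
  have hbdd : BddBelow (g '' P) := (hPcomp.image hgcont).bddBelow
  have hDnn : 0 ≤ D := hD ▸ Metric.diam_nonneg
  have hxs : ‖xh - s‖ ≤ D := by
    rw [hD, ← dist_eq_norm]; exact Metric.dist_le_diam_of_mem hPcomp.isBounded hxh hs
  have hsqrt : ∀ c : ℝ, √(2 * (L * D ^ 2) * c) = D * √(2 * L * c) := fun c => by
    rw [show 2 * (L * D ^ 2) * c = D ^ 2 * (2 * L * c) by ring, Real.sqrt_mul (sq_nonneg D),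
      Real.sqrt_sq hDnn]
  subst hgap hc
  have hstep := fun γ (hγ : γ ∈ Set.Icc (0 : ℝ) 1) =>
    mul_inner_sub_sq_le_sub_sInf hL.le hgrad hlip hPconv hbdd hxh hs hxs hγ
  refine ⟨sub_sInf_image_le_inner_of_convexOn hconv (hgrad xh) hxh hlmo, fun _ => ?_, fun hc => ?_⟩
  · linarith [hstep 1 ⟨zero_le_one, le_rfl⟩]
  · exact (le_sqrt_of_forall_mul_sub_sq_le hc hstep).trans_eq (hsqrt _)

theorem stmt_0 {d : ℕ} (g : EuclideanSpace ℝ (Fin d) → ℝ)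
    (g' : EuclideanSpace ℝ (Fin d) → EuclideanSpace ℝ (Fin d))
    (L : ℝ) (hL : 0 < L)
    (hconv : ConvexOn ℝ Set.univ g)
    (hgrad : ∀ x, HasGradientAt g (g' x) x)
    (hlip : ∀ x y, ‖g' x - g' y‖ ≤ L * ‖x - y‖)
    (P : Set (EuclideanSpace ℝ (Fin d)))
    (hPcomp : IsCompact P) (hPconv : Convex ℝ P) (hPne : P.Nonempty)
    (D : ℝ) (hD : D = Metric.diam P)
    (xh : EuclideanSpace ℝ (Fin d)) (hxh : xh ∈ P)
    (s : EuclideanSpace ℝ (Fin d)) (hs : s ∈ P)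
    (hlmo : ∀ x ∈ P, ⟪g' xh, s⟫ ≤ ⟪g' xh, x⟫)
    (gap c : ℝ) (hgap : gap = ⟪g' xh, xh - s⟫)
    (hc : c = g xh - sInf (g '' P)) :
    c ≤ gap ∧
    (L * D ^ 2 / 2 < c → gap ≤ c + L * D ^ 2 / 2) ∧
    (c ≤ L * D ^ 2 / 2 → gap ≤ D * Real.sqrt (2 * L * c)) :=
  stmt_0_general g g' L hL hconv hgrad hlip P hPcomp hPconv D hD xh hxh s hs hlmo gap c hgap hc
end

section
/- Let (a_n) be a nonnegative real sequence satisfying a_n² ≤ S_n + Σ_{k=1}^n λ_k a_k for all n ≥ 1, where (S_n) is a nondecreasing sequence with S_0 ≥ a_0², and λ_k ≥ 0 for all k. Then for all n, a_n ≤ A_n + √(S_n + A_n²), where A_n = (1/2) Σ_{k=1}^n λ_k. -/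
/-! Let `a k` be the largest of `a 0, …, a n`. Bounding every `a i` in the recursive inequality
at `k` by `a k` gives the quadratic inequality `a k ^ 2 ≤ S n + 2 A_n a k`, whose solutions satisfy
`a k ≤ A_n + √(S n + A_n ^ 2)`. -/

open Finset

theorem le_add_sqrt_of_sq_le_add_mul {x b s : ℝ} (h : x ^ 2 ≤ s + 2 * b * x) :
    x ≤ b + √(s + b ^ 2) := by
  have : |x - b| ≤ √(s + b ^ 2) := Real.abs_le_sqrt (by nlinarith)
  linarith [le_abs_self (x - b)]

theorem sum_Icc_mul_le_sum_mul_of_forall_le {a lam : ℕ → ℝ} {k n : ℕ}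
    (ha : ∀ n, 0 ≤ a n) (hlam : ∀ k, 0 ≤ lam k) (hkn : k ≤ n) (hmax : ∀ j ≤ n, a j ≤ a k) :
    ∑ i ∈ Icc 1 k, lam i * a i ≤ (∑ i ∈ Icc 1 n, lam i) * a k := by
  rw [sum_mul]
  calc ∑ i ∈ Icc 1 k, lam i * a i
      ≤ ∑ i ∈ Icc 1 k, lam i * a k :=
        sum_le_sum fun i hi => mul_le_mul_of_nonneg_left
          (hmax i ((mem_Icc.mp hi).2.trans hkn)) (hlam i)
    _ ≤ ∑ i ∈ Icc 1 n, lam i * a k :=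
        sum_le_sum_of_subset_of_nonneg (Icc_subset_Icc_right hkn)
          fun i _ _ => mul_nonneg (hlam i) (ha k)

open Finset in
theorem stmt_2 (a S lam : ℕ → ℝ)
    (ha : ∀ n, 0 ≤ a n) (hlam : ∀ k, 0 ≤ lam k)
    (hS : Monotone S) (hS0 : a 0 ^ 2 ≤ S 0)
    (hrec : ∀ n ≥ 1, a n ^ 2 ≤ S n + ∑ k ∈ Finset.Icc 1 n, lam k * a k) :
    ∀ n, a n ≤ (1 / 2) * ∑ k ∈ Finset.Icc 1 n, lam k +
      Real.sqrt (S n + ((1 / 2) * ∑ k ∈ Finset.Icc 1 n, lam k) ^ 2) := by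
  have hsq : ∀ k, a k ^ 2 ≤ S k + ∑ i ∈ Icc 1 k, lam i * a i := by
    rintro (_ | k)
    · simpa using hS0
    · exact hrec _ k.succ_pos
  intro n
  obtain ⟨k, hk, hmax⟩ := exists_max_image (range (n + 1)) a ⟨0, by simp⟩
  have hkn : k ≤ n := Nat.lt_succ_iff.mp (mem_range.mp hk)
  have hle : ∀ j ≤ n, a j ≤ a k := fun j hj => hmax j (mem_range.mpr (Nat.lt_succ_of_le hj))
  have hquad : a k ^ 2 ≤ S n + 2 * ((1 / 2) * ∑ i ∈ Icc 1 n, lam i) * a k := by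
    linarith [hsq k, hS hkn, sum_Icc_mul_le_sum_mul_of_forall_le ha hlam hkn hle]
  exact (hle n le_rfl).trans (le_add_sqrt_of_sq_le_add_mul hquad)
end

section
/- Let φ : ℝ^m → ℝ ∪ {+∞} be a proper convex lower semicontinuous function, γ > 0, ε ≥ 0, and let ŷ satisfy φ(ŷ) + (1/(2γ))‖ŷ - ȳ‖² ≤ inf_y [φ(y) + (1/(2γ))‖y - ȳ‖²] + ε (i.e., ŷ is an ε-approximate proximal point of φ at ȳ). Then there exists a vector r with ‖r‖ ≤ √(2γε) such that for all z: φ(z) ≥ φ(ŷ) + ⟨(ȳ - ŷ - r)/γ, z - ŷ⟩ - ε. -/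
/-!
Let `ψ = φ + ‖· - ȳ‖² / (2γ)`. It is lower semicontinuous and `1/γ`-strongly convex, so its
sublevel set through the `ε`-minimiser `ŷ` is bounded and `ψ` has an exact minimiser `p`.
Strong convexity at a minimiser gives `ψ z ≥ ψ p + ‖z - p‖² / (2γ)`, which says both that
`(ȳ - p)/γ` is a subgradient of `φ` at `p` and, at `z = ŷ`, that `‖p - ŷ‖² ≤ 2γε`.
Then `r = p - ŷ` works.
-/

open scoped RealInnerProductSpace Topology
open Filter

lemma LowerSemicontinuous.exists_forall_le_of_isCompact {α β : Type*} [TopologicalSpace α]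
    [LinearOrder β] {f : α → β} (hf : LowerSemicontinuous f) {x₀ : α}
    (hK : IsCompact {x | f x ≤ f x₀}) : ∃ x, ∀ y, f x ≤ f y := by
  obtain ⟨x, hx, hmin⟩ := (hf.lowerSemicontinuousOn _).exists_isMinOn ⟨x₀, le_refl (f x₀)⟩ hK
  refine ⟨x, fun y ↦ ?_⟩
  rcases le_or_gt (f y) (f x₀) with hy | hy
  · exact hmin hy
  · exact hx.trans hy.le

section StrongConvexity

variable {E : Type*} [NormedAddCommGroup E] [InnerProductSpace ℝ E] {s : Set E} {m : ℝ}
  {f : E → ℝ}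

lemma strongConvexOn_mul_norm_sub_sq (hs : Convex ℝ s) (m : ℝ) (a : E) :
    StrongConvexOn s m fun x ↦ m / 2 * ‖x - a‖ ^ 2 := by
  rw [strongConvexOn_iff_convex]
  refine ((LinearMap.convexOn ((-m) • innerₗ E a) hs).add_const (m / 2 * ‖a‖ ^ 2)).congr
    fun x _ ↦ ?_
  simp only [norm_sub_sq_real, Pi.add_apply, LinearMap.smul_apply, innerₗ_apply_apply,
    smul_eq_mul, real_inner_comm a x]
  ring

lemma ConvexOn.add_strongConvexOn {g : E → ℝ} (hf : ConvexOn ℝ s f) (hg : StrongConvexOn s m g) :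
    StrongConvexOn s m (f + g) := by
  simpa [StrongConvexOn] using (uniformConvexOn_zero.2 hf).add hg

lemma StrongConvexOn.add_mul_norm_sub_sq_le_of_isMinOn (hf : StrongConvexOn s m f) {p z : E}
    (hp : p ∈ s) (hmin : IsMinOn f s p) (hz : z ∈ s) :
    f p + m / 2 * ‖z - p‖ ^ 2 ≤ f z := by
  have hgap : ∀ t ∈ Set.Ioo (0 : ℝ) 1, (1 - t) * (m / 2 * ‖z - p‖ ^ 2) ≤ f z - f p := by
    rintro t ⟨ht0, ht1⟩
    have hconv := hf.2 hp hz (sub_nonneg.2 ht1.le) ht0.le (sub_add_cancel 1 t)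
    have hle : f p ≤ f ((1 - t) • p + t • z) :=
      hmin (hf.1 hp hz (sub_nonneg.2 ht1.le) ht0.le (sub_add_cancel 1 t))
    rw [smul_eq_mul, smul_eq_mul, norm_sub_rev p z] at hconv
    refine le_of_mul_le_mul_left ?_ ht0
    linarith
  have hlim : Tendsto (fun t : ℝ ↦ (1 - t) * (m / 2 * ‖z - p‖ ^ 2)) (𝓝[>] 0)
      (𝓝 (m / 2 * ‖z - p‖ ^ 2)) := by
    have : Continuous fun t : ℝ ↦ (1 - t) * (m / 2 * ‖z - p‖ ^ 2) := by fun_prop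
    simpa using (this.tendsto 0).mono_left nhdsWithin_le_nhds
  have := le_of_tendsto hlim (eventually_of_mem (Ioo_mem_nhdsGT one_pos) hgap)
  linarith

lemma StrongConvexOn.mul_norm_sub_sq_le_of_approx_isMinOn (hf : StrongConvexOn s m f) {ε : ℝ}
    {y w : E} (hy : y ∈ s) (happrox : ∀ x ∈ s, f y ≤ f x + ε) (hw : w ∈ s) (hwy : f w ≤ f y) :
    m / 8 * ‖w - y‖ ^ 2 ≤ ε := by
  have hhalf : (0 : ℝ) ≤ 1 / 2 := by norm_num
  have hconv := hf.2 hw hy hhalf hhalf (by norm_num)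
  have hmid := happrox _ (hf.1 hw hy hhalf hhalf (by norm_num))
  rw [smul_eq_mul, smul_eq_mul] at hconv
  linarith

lemma ConvexOn.mul_norm_sub_sq_le_and_add_inner_le_of_isMinOn (hf : ConvexOn ℝ s f) (hm : 0 ≤ m)
    {ε : ℝ} {a y p : E} (hp : p ∈ s) (hmin : IsMinOn (fun x ↦ f x + m / 2 * ‖x - a‖ ^ 2) s p)
    (hy : y ∈ s) (happrox : f y + m / 2 * ‖y - a‖ ^ 2 ≤ f p + m / 2 * ‖p - a‖ ^ 2 + ε) :
    m / 2 * ‖p - y‖ ^ 2 ≤ ε ∧ ∀ z ∈ s, f y + (⟪m • (a - p), z - y⟫ - ε) ≤ f z := by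
  have hgrowth : ∀ z ∈ s, f p + m / 2 * ‖p - a‖ ^ 2 + m / 2 * ‖z - p‖ ^ 2 ≤
      f z + m / 2 * ‖z - a‖ ^ 2 :=
    fun z hz ↦ (hf.add_strongConvexOn (strongConvexOn_mul_norm_sub_sq hf.1 m a))
      |>.add_mul_norm_sub_sq_le_of_isMinOn hp hmin hz
  have hexpand (z : E) : ‖z - a‖ ^ 2 = ‖p - a‖ ^ 2 + 2 * ⟪p - a, z - p⟫ + ‖z - p‖ ^ 2 := by
    rw [← norm_add_sq_real, sub_add_sub_cancel']
  refine ⟨by rw [norm_sub_rev]; linarith [hgrowth y hy], fun z hz ↦ ?_⟩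
  rw [hexpand y] at happrox
  have hz_growth := hgrowth z hz
  rw [hexpand z] at hz_growth
  have hinner : ⟪m • (a - p), z - y⟫ = m * ⟪p - a, y - p⟫ - m * ⟪p - a, z - p⟫ := by
    rw [real_inner_smul_left, ← mul_sub, ← inner_sub_right, ← neg_sub p a, inner_neg_left,
      sub_sub_sub_cancel_right, ← inner_neg_right, neg_sub]
  have : 0 ≤ m / 2 * ‖y - p‖ ^ 2 := by positivity
  rw [hinner]
  nlinarith

theorem StrongConvexOn.exists_isMinOn_of_lowerSemicontinuous [ProperSpace E] {g : E → ℝ}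
    (hg : StrongConvexOn s m g) (hm : 0 < m) {ψ : E → EReal} (hψ : LowerSemicontinuous ψ)
    (hψs : ∀ x ∈ s, ψ x = g x) (hψt : ∀ x ∉ s, ψ x = ⊤) {ε : ℝ} {y : E} (hy : y ∈ s)
    (happrox : ∀ x ∈ s, g y ≤ g x + ε) :
    ∃ p ∈ s, IsMinOn g s p := by
  have hsublevel : ∀ x, ψ x ≤ ψ y → x ∈ s ∧ g x ≤ g y := by
    intro x hx
    by_cases hxs : x ∈ s
    · rw [hψs x hxs, hψs y hy] at hx
      exact ⟨hxs, EReal.coe_le_coe_iff.1 hx⟩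
    · rw [hψt x hxs, hψs y hy, top_le_iff] at hx
      exact absurd hx (EReal.coe_ne_top _)
  have hbounded : {x | ψ x ≤ ψ y} ⊆ Metric.closedBall y √(8 * ε / m) := by
    intro x hx
    obtain ⟨hxs, hxy⟩ := hsublevel x hx
    have := hg.mul_norm_sub_sq_le_of_approx_isMinOn hy happrox hxs hxy
    rw [Metric.mem_closedBall, dist_eq_norm]
    refine Real.le_sqrt_of_sq_le ?_
    rw [le_div_iff₀ hm]
    linarith
  obtain ⟨p, hp⟩ := hψ.exists_forall_le_of_isCompact
    ((isCompact_closedBall y _).of_isClosed_subset (hψ.isClosed_preimage (ψ y)) hbounded)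
  have hps := (hsublevel p (hp y)).1
  refine ⟨p, hps, fun x hx ↦ ?_⟩
  have hpx := hp x
  rw [hψs p hps, hψs x hx] at hpx
  exact EReal.coe_le_coe_iff.1 hpx

end StrongConvexity

lemma convexOn_toReal_of_convex_epigraph {E : Type*} [AddCommGroup E] [Module ℝ E]
    {φ : E → EReal} (hbot : ∀ x, φ x ≠ ⊥) (hconv : Convex ℝ {p : E × ℝ | φ p.1 ≤ (p.2 : EReal)}) :
    ConvexOn ℝ {x | φ x ≠ ⊤} fun x ↦ (φ x).toReal := by
  have hcomb : ∀ ⦃x⦄, φ x ≠ ⊤ → ∀ ⦃y⦄, φ y ≠ ⊤ → ∀ ⦃a b : ℝ⦄, 0 ≤ a → 0 ≤ b → a + b = 1 →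
      φ (a • x + b • y) ≤ ((a * (φ x).toReal + b * (φ y).toReal : ℝ) : EReal) := by
    intro x hx y hy a b ha hb hab
    simpa using hconv (x := (x, (φ x).toReal)) (y := (y, (φ y).toReal))
      (EReal.coe_toReal hx (hbot x)).ge (EReal.coe_toReal hy (hbot y)).ge ha hb hab
  exact ⟨fun x hx y hy a b ha hb hab ↦ ((hcomb hx hy ha hb hab).trans_lt (EReal.coe_lt_top _)).ne,
    fun x hx y hy a b ha hb hab ↦ (EReal.toReal_le_toReal (hcomb hx hy ha hb hab) (hbot _)
      (EReal.coe_ne_top _)).trans_eq (EReal.toReal_coe _)⟩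

lemma EReal.ne_top_and_toReal_add_le_of_add_le {a b : EReal} {x y ε : ℝ} (ha : a ≠ ⊥)
    (hb : b ≠ ⊥) (hb' : b ≠ ⊤) (h : a + x ≤ b + y + ε) :
    a ≠ ⊤ ∧ a.toReal + x ≤ b.toReal + y + ε := by
  lift b to ℝ using ⟨hb', hb⟩
  have ha' : a ≠ ⊤ := by
    rintro rfl
    exact EReal.coe_ne_top (b + y + ε) (top_le_iff.1 (by exact_mod_cast h))
  lift a to ℝ using ⟨ha', ha⟩
  exact ⟨EReal.coe_ne_top _, by exact_mod_cast h⟩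

theorem ConvexOn.exists_isMinOn_toReal_add_mul_norm_sub_sq {E : Type*} [NormedAddCommGroup E]
    [InnerProductSpace ℝ E] [ProperSpace E] {φ : E → EReal}
    (hf : ConvexOn ℝ {x | φ x ≠ ⊤} fun x ↦ (φ x).toReal) (hbot : ∀ x, φ x ≠ ⊥)
    (hlsc : LowerSemicontinuous φ) {m : ℝ} (hm : 0 < m) (a : E) {ε : ℝ} {y : E} (hy : φ y ≠ ⊤)
    (happrox : ∀ x, φ x ≠ ⊤ →
      (φ y).toReal + m / 2 * ‖y - a‖ ^ 2 ≤ (φ x).toReal + m / 2 * ‖x - a‖ ^ 2 + ε) :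
    ∃ p, φ p ≠ ⊤ ∧ IsMinOn (fun x ↦ (φ x).toReal + m / 2 * ‖x - a‖ ^ 2) {x | φ x ≠ ⊤} p := by
  set ψ := fun x ↦ φ x + ((m / 2 * ‖x - a‖ ^ 2 : ℝ) : EReal)
  have hψs : ∀ x, φ x ≠ ⊤ → ψ x = ((φ x).toReal + m / 2 * ‖x - a‖ ^ 2 : ℝ) := by
    intro x hx
    rw [EReal.coe_add, EReal.coe_toReal hx (hbot x)]
  have hψt : ∀ x, ¬φ x ≠ ⊤ → ψ x = ⊤ := by
    intro x hx
    simp only [ψ, not_not.1 hx, EReal.top_add_coe]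
  have hψ : LowerSemicontinuous ψ :=
    hlsc.add' (continuous_coe_real_ereal.comp (by fun_prop)).lowerSemicontinuous
      fun x ↦ EReal.continuousAt_add (Or.inr (EReal.coe_ne_bot _)) (Or.inl (hbot x))
  exact (hf.add_strongConvexOn (strongConvexOn_mul_norm_sub_sq hf.1 m a))
    |>.exists_isMinOn_of_lowerSemicontinuous hm hψ hψs hψt hy happrox

theorem stmt_3_general {m : ℕ} (φ : EuclideanSpace ℝ (Fin m) → EReal)
    (hne_bot : ∀ y, φ y ≠ ⊥) (hne_top : ∃ y, φ y ≠ ⊤)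
    (hconv : Convex ℝ {p : EuclideanSpace ℝ (Fin m) × ℝ | φ p.1 ≤ (p.2 : EReal)})
    (hlsc : LowerSemicontinuous φ)
    (γ ε : ℝ) (hγ : 0 < γ)
    (ybar yh : EuclideanSpace ℝ (Fin m))
    (hprox : ∀ y, φ yh + ((1 / (2 * γ) * ‖yh - ybar‖ ^ 2 : ℝ) : EReal) ≤
        φ y + ((1 / (2 * γ) * ‖y - ybar‖ ^ 2 : ℝ) : EReal) + (ε : EReal)) :
    ∃ r : EuclideanSpace ℝ (Fin m), ‖r‖ ≤ Real.sqrt (2 * γ * ε) ∧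
      ∀ z, φ yh + ((⟪γ⁻¹ • (ybar - yh - r), z - yh⟫ - ε : ℝ) : EReal) ≤ φ z := by
  simp only [show 1 / (2 * γ) = γ⁻¹ / 2 by ring] at hprox
  obtain ⟨y₀, hy₀⟩ := hne_top
  have hyh : φ yh ≠ ⊤ :=
    (EReal.ne_top_and_toReal_add_le_of_add_le (hne_bot _) (hne_bot _) hy₀ (hprox y₀)).1
  have happrox (y) (hy : φ y ≠ ⊤) :=
    (EReal.ne_top_and_toReal_add_le_of_add_le (hne_bot _) (hne_bot _) hy (hprox y)).2
  have hf := convexOn_toReal_of_convex_epigraph hne_bot hconv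
  obtain ⟨p, hp, hpmin⟩ :=
    hf.exists_isMinOn_toReal_add_mul_norm_sub_sq hne_bot hlsc (inv_pos.2 hγ) ybar hyh happrox
  obtain ⟨hdist, hsubgrad⟩ := hf.mul_norm_sub_sq_le_and_add_inner_le_of_isMinOn
    (inv_nonneg.2 hγ.le) hp hpmin hyh (happrox p hp)
  refine ⟨p - yh, Real.le_sqrt_of_sq_le ?_, fun z ↦ ?_⟩
  · calc ‖p - yh‖ ^ 2 = 2 * γ * (γ⁻¹ / 2 * ‖p - yh‖ ^ 2) := by field_simp
      _ ≤ 2 * γ * ε := by gcongr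
  · by_cases hz : φ z = ⊤
    · exact hz ▸ le_top
    · rw [← EReal.coe_toReal hyh (hne_bot yh), ← EReal.coe_toReal hz (hne_bot z),
        sub_sub_sub_cancel_right, ← EReal.coe_add]
      exact EReal.coe_le_coe_iff.2 (hsubgrad z hz)

theorem stmt_3 {m : ℕ} (φ : EuclideanSpace ℝ (Fin m) → EReal)
    (hne_bot : ∀ y, φ y ≠ ⊥) (hne_top : ∃ y, φ y ≠ ⊤)
    (hconv : Convex ℝ {p : EuclideanSpace ℝ (Fin m) × ℝ | φ p.1 ≤ (p.2 : EReal)})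
    (hlsc : LowerSemicontinuous φ)
    (γ ε : ℝ) (hγ : 0 < γ) (hε : 0 ≤ ε)
    (ybar yh : EuclideanSpace ℝ (Fin m))
    (hprox : ∀ y, φ yh + ((1 / (2 * γ) * ‖yh - ybar‖ ^ 2 : ℝ) : EReal) ≤
        φ y + ((1 / (2 * γ) * ‖y - ybar‖ ^ 2 : ℝ) : EReal) + (ε : EReal)) :
    ∃ r : EuclideanSpace ℝ (Fin m), ‖r‖ ≤ Real.sqrt (2 * γ * ε) ∧
      ∀ z, φ yh + ((⟪γ⁻¹ • (ybar - yh - r), z - yh⟫ - ε : ℝ) : EReal) ≤ φ z :=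
  stmt_3_general φ hne_bot hne_top hconv hlsc γ ε hγ ybar yh hprox
end

section
/- Let P ⊆ ℝ^d be a polytope (a compact set that is the convex hull of finitely many points), H ⊆ ℝ^d an affine subspace, and suppose Q = P ∩ H is nonempty. Then there exists a constant β ≥ 0 such that for all x ∈ P: dist(x, Q) ≤ β · dist(x, H). -/
/-!
Writing the polytope as the image of the standard simplex `Δ ⊆ ℝ^V` under `l ↦ ∑ l_v • v`,
`Q` becomes the image of the polyhedron `{l | l ≥ 0, ∑ l_v = 1, A (∑ l_v • v) = b}`, so it
suffices to prove a Hoffman-type bound for polyhedra `{L x = c, g_i x ≤ r_i}` on bounded sets: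
a point satisfying the inequalities lies within `β ‖L x - c‖` of the polyhedron. This goes by
induction on the inequalities. If the polyhedron `K'` of the other constraints has a point where
`g < r`, a near point of `K'` violating `g ≤ r` is moved along the segment towards it, at a
cost proportional to the violation. Otherwise `g = r` on `K' ∩ {g ≤ r}`, so `g ≤ r` may be
traded for the equation `g = r`, whose residual is controlled by the bound for `K'`.
-/

open Bornology Metric

variable {E F : Type*} [NormedAddCommGroup E] [NormedSpace ℝ E]
  [NormedAddCommGroup F] [NormedSpace ℝ F]

def feasibleSet (L : E →L[ℝ] F) (c : F) (S : Finset ((E →L[ℝ] ℝ) × ℝ)) : Set E :=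
  {x | L x = c ∧ ∀ p ∈ S, p.1 x ≤ p.2}

section feasibleSet

variable {L : E →L[ℝ] F} {c : F} {S : Finset ((E →L[ℝ] ℝ) × ℝ)}

theorem mem_feasibleSet_insert [DecidableEq ((E →L[ℝ] ℝ) × ℝ)] {g : E →L[ℝ] ℝ} {r : ℝ} {x : E} :
    x ∈ feasibleSet L c (insert (g, r) S) ↔ x ∈ feasibleSet L c S ∧ g x ≤ r := by
  simp only [feasibleSet, Set.mem_ofPred_eq, Finset.forall_mem_insert]
  tauto

theorem mem_feasibleSet_prod {g : E →L[ℝ] ℝ} {r : ℝ} {x : E} :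
    x ∈ feasibleSet (L.prod g) (c, r) S ↔ x ∈ feasibleSet L c S ∧ g x = r := by
  simp only [feasibleSet, Set.mem_ofPred_eq, ContinuousLinearMap.prod_apply, Prod.mk.injEq]
  tauto

theorem convex_feasibleSet : Convex ℝ (feasibleSet L c S) := by
  have : feasibleSet L c S = L ⁻¹' {c} ∩ ⋂ p ∈ S, {x | p.1 x ≤ p.2} := by
    ext x
    simp [feasibleSet]
  rw [this]
  exact ((convex_singleton c).linear_preimage L.toLinearMap).inter
    (convex_iInter₂ fun p _ => convex_halfSpace_le p.1.toLinearMap.isLinear p.2)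

end feasibleSet

theorem ContinuousLinearMap.exists_mem_fiber_norm_sub_le [FiniteDimensional ℝ E]
    (L : E →L[ℝ] F) :
    ∃ C, 0 ≤ C ∧ ∀ x z, ∃ y, L y = L z ∧ ‖x - y‖ ≤ C * ‖L x - L z‖ := by
  have hsurj : Function.Surjective L.rangeRestrict := by
    rintro ⟨_, z, rfl⟩
    exact ⟨z, rfl⟩
  obtain ⟨C, hC, hpre⟩ := L.rangeRestrict.exists_preimage_norm_le hsurj
  refine ⟨C, hC.le, fun x z => ?_⟩
  obtain ⟨u, hu, hnorm⟩ := hpre ⟨L x - L z, x - z, map_sub L x z⟩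
  have hLu : L u = L x - L z := congrArg Subtype.val hu
  refine ⟨x - u, by rw [map_sub, hLu, sub_sub_cancel], ?_⟩
  rwa [sub_sub_cancel]

theorem exists_mem_inter_halfSpace_norm_sub_le {C : Set E} (hC : Convex ℝ C) (g : E →L[ℝ] ℝ)
    {r : ℝ} {x y z : E} (hy : y ∈ C) (hz : z ∈ C) (hgz : g z < r) (hx : g x ≤ r) :
    ∃ y' ∈ C, g y' ≤ r ∧ ‖x - y'‖ ≤ ‖x - y‖ + ‖g‖ * ‖x - y‖ / (r - g z) * ‖z - y‖ := by
  have hγ : 0 < r - g z := sub_pos.mpr hgz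
  by_cases hgy : g y ≤ r
  · exact ⟨y, hy, hgy, le_add_of_nonneg_right (by positivity)⟩
  set δ := g y - r
  have hδ : 0 < δ := sub_pos.mpr (not_le.mp hgy)
  have hδle : δ ≤ ‖g‖ * ‖x - y‖ := by
    calc δ ≤ g (y - x) := by rw [map_sub]; linarith
      _ ≤ ‖g (y - x)‖ := Real.le_norm_self _
      _ ≤ ‖g‖ * ‖x - y‖ := by rw [norm_sub_rev x y]; exact g.le_opNorm _
  set t := δ / (δ + (r - g z))
  have ht0 : 0 ≤ t := by positivity
  have ht1 : t ≤ 1 := div_le_one_of_le₀ (by linarith) (by positivity)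
  have htδ : t * (δ + (r - g z)) = δ := div_mul_cancel₀ _ (by positivity)
  refine ⟨(1 - t) • y + t • z, hC hy hz (by linarith) ht0 (by ring), ?_, ?_⟩
  · simp only [map_add, map_smul, smul_eq_mul]
    nlinarith
  · have htle : t ≤ ‖g‖ * ‖x - y‖ / (r - g z) := by
      calc t ≤ δ / (r - g z) := div_le_div_of_nonneg_left hδ.le hγ (by linarith)
        _ ≤ _ := by gcongr
    calc ‖x - ((1 - t) • y + t • z)‖ = ‖(x - y) - t • (z - y)‖ := by
          congr 1; simp only [sub_smul, one_smul, smul_sub]; abel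
      _ ≤ ‖x - y‖ + t * ‖z - y‖ :=
          (norm_sub_le _ _).trans_eq (by rw [norm_smul_of_nonneg ht0])
      _ ≤ _ := by gcongr

def IsHoffmanConstant (B : Set E) (L : E →L[ℝ] F) (c : F) (S : Finset ((E →L[ℝ] ℝ) × ℝ))
    (β : ℝ) : Prop :=
  ∀ x ∈ B, (∀ p ∈ S, p.1 x ≤ p.2) → ∃ y ∈ feasibleSet L c S, ‖x - y‖ ≤ β * ‖L x - c‖

namespace IsHoffmanConstant

variable [DecidableEq ((E →L[ℝ] ℝ) × ℝ)] {B : Set E} {L : E →L[ℝ] F} {c : F}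
  {S : Finset ((E →L[ℝ] ℝ) × ℝ)} {β : ℝ} {g : E →L[ℝ] ℝ} {r : ℝ}

theorem insert_of_slater (hB : IsBounded B) (h : IsHoffmanConstant B L c S β) (hβ : 0 ≤ β)
    {z : E} (hz : z ∈ feasibleSet L c S) (hgz : g z < r) :
    ∃ β', 0 ≤ β' ∧ IsHoffmanConstant B L c (insert (g, r) S) β' := by
  obtain ⟨R, hR, hBR⟩ := hB.subset_closedBall_lt 0 z
  have hγ : 0 < r - g z := sub_pos.mpr hgz
  refine ⟨β + ‖g‖ * β / (r - g z) * (R + β * (‖L‖ * R)), by positivity, fun x hxB hx => ?_⟩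
  rw [Finset.forall_mem_insert] at hx
  obtain ⟨y, hy, hxy⟩ := h x hxB hx.2
  have hxz : ‖x - z‖ ≤ R := mem_closedBall_iff_norm.mp (hBR hxB)
  have hres : ‖L x - c‖ ≤ ‖L‖ * R := by
    rw [← hz.1, ← map_sub]
    exact (L.le_opNorm _).trans (by gcongr)
  have hzy : ‖z - y‖ ≤ R + β * (‖L‖ * R) := by
    calc ‖z - y‖ ≤ ‖x - z‖ + ‖x - y‖ := by
          rw [norm_sub_rev x z]; exact norm_sub_le_norm_sub_add_norm_sub z x y
      _ ≤ _ := by gcongr; exact hxy.trans (by gcongr)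
  obtain ⟨y', hy', hgy', hxy'⟩ :=
    exists_mem_inter_halfSpace_norm_sub_le convex_feasibleSet g hy hz hgz hx.1
  refine ⟨y', mem_feasibleSet_insert.mpr ⟨hy', hgy'⟩, hxy'.trans ?_⟩
  calc ‖x - y‖ + ‖g‖ * ‖x - y‖ / (r - g z) * ‖z - y‖
      ≤ β * ‖L x - c‖ + ‖g‖ * (β * ‖L x - c‖) / (r - g z) * (R + β * (‖L‖ * R)) := by
        gcongr
    _ = _ := by ring

theorem insert_of_forall_le (h : IsHoffmanConstant B L c S β)
    (hdeg : ∀ z ∈ feasibleSet L c S, r ≤ g z) {β₂ : ℝ}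
    (h₂ : IsHoffmanConstant B (L.prod g) (c, r) S β₂) (hβ₂ : 0 ≤ β₂) :
    IsHoffmanConstant B L c (insert (g, r) S) (β₂ * (1 + ‖g‖ * β)) := by
  intro x hxB hx
  rw [Finset.forall_mem_insert] at hx
  obtain ⟨y₁, hy₁, hxy₁⟩ := h x hxB hx.2
  have hgx : |g x - r| ≤ ‖g‖ * (β * ‖L x - c‖) := by
    rw [abs_sub_comm, abs_of_nonneg (sub_nonneg.mpr hx.1)]
    calc r - g x ≤ g (y₁ - x) := by rw [map_sub]; linarith [hdeg y₁ hy₁]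
      _ ≤ ‖g‖ * ‖x - y₁‖ := by
          rw [norm_sub_rev]; exact (Real.le_norm_self _).trans (g.le_opNorm _)
      _ ≤ _ := by gcongr
  obtain ⟨y, hy, hxy⟩ := h₂ x hxB hx.2
  obtain ⟨hyS, hgy⟩ := mem_feasibleSet_prod.mp hy
  refine ⟨y, mem_feasibleSet_insert.mpr ⟨hyS, hgy.le⟩, hxy.trans ?_⟩
  calc β₂ * ‖(L.prod g) x - (c, r)‖ = β₂ * max ‖L x - c‖ |g x - r| := by
        rw [ContinuousLinearMap.prod_apply, Prod.mk_sub_mk, Prod.norm_mk, Real.norm_eq_abs]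
    _ ≤ β₂ * (‖L x - c‖ + ‖g‖ * (β * ‖L x - c‖)) := by
        gcongr
        exact max_le (le_add_of_nonneg_right ((abs_nonneg _).trans hgx))
          (hgx.trans (le_add_of_nonneg_left (norm_nonneg _)))
    _ = _ := by ring

end IsHoffmanConstant

theorem exists_isHoffmanConstant [FiniteDimensional ℝ E] {B : Set E} (hB : IsBounded B)
    (S : Finset ((E →L[ℝ] ℝ) × ℝ)) (L : E →L[ℝ] F) (c : F) (hne : (feasibleSet L c S).Nonempty) :
    ∃ β, 0 ≤ β ∧ IsHoffmanConstant B L c S β := by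
  classical
  induction S using Finset.induction_on generalizing F with
  | empty =>
    obtain ⟨z, hz, -⟩ := hne
    obtain ⟨C, hC, hL⟩ := L.exists_mem_fiber_norm_sub_le
    refine ⟨C, hC, fun x _ _ => ?_⟩
    obtain ⟨y, hy, hxy⟩ := hL x z
    rw [hz] at hy hxy
    exact ⟨y, ⟨hy, by simp⟩, hxy⟩
  | insert p S _ ih =>
    obtain ⟨g, r⟩ := p
    obtain ⟨z, hz⟩ := hne
    obtain ⟨hzS, hgz⟩ := mem_feasibleSet_insert.mp hz
    obtain ⟨β, hβ, hS⟩ := ih L c ⟨z, hzS⟩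
    by_cases hslater : ∃ w ∈ feasibleSet L c S, g w < r
    · obtain ⟨w, hw, hgw⟩ := hslater
      exact hS.insert_of_slater hB hβ hw hgw
    · push Not at hslater
      obtain ⟨β₂, hβ₂, hS₂⟩ := ih (L.prod g) (c, r)
        ⟨z, mem_feasibleSet_prod.mpr ⟨hzS, le_antisymm hgz (hslater z hzS)⟩⟩
      exact ⟨_, by positivity, hS.insert_of_forall_le hslater hS₂ hβ₂⟩

open Finset in
theorem forall_mem_image_neg_proj_iff {ι : Type*} [Fintype ι] [DecidableEq ((ι → ℝ) →L[ℝ] ℝ)]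
    (l : ι → ℝ) :
    (∀ p ∈ univ.image fun i => (-ContinuousLinearMap.proj (R := ℝ) i, (0 : ℝ)), p.1 l ≤ p.2) ↔
      ∀ i, 0 ≤ l i := by
  simp

open Finset in
theorem feasibleSet_prod_sum_eq_stdSimplex_inter {ι : Type*} [Fintype ι]
    [DecidableEq ((ι → ℝ) →L[ℝ] ℝ)] (L : (ι → ℝ) →L[ℝ] F) (c : F) :
    feasibleSet (L.prod (∑ i, ContinuousLinearMap.proj (R := ℝ) i)) (c, 1)
        (univ.image fun i => (-ContinuousLinearMap.proj (R := ℝ) i, (0 : ℝ))) =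
      stdSimplex ℝ ι ∩ L ⁻¹' {c} := by
  ext l
  simp only [feasibleSet, forall_mem_image_neg_proj_iff, Set.mem_ofPred_eq,
    ContinuousLinearMap.prod_apply, _root_.sum_apply, ContinuousLinearMap.proj_apply,
    Prod.mk.injEq, stdSimplex, Set.mem_inter_iff, Set.mem_preimage, Set.mem_singleton_iff]
  tauto

theorem convexHull_eq_image_stdSimplex (V : Finset E) :
    convexHull ℝ (V : Set E) = Fintype.linearCombination ℝ ((↑) : V → E) '' stdSimplex ℝ V := by
  classical
  rw [← convexHull_rangle_single_eq_stdSimplex, LinearMap.image_convexHull, ← Set.range_comp]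
  congr
  ext x
  simp [Fintype.linearCombination_apply_single]

theorem ContinuousLinearMap.norm_sub_le_mul_infDist (A : E →L[ℝ] F) {b : F}
    (hne : {x | A x = b}.Nonempty) (x : E) : ‖A x - b‖ ≤ ‖A‖ * infDist x {x | A x = b} := by
  have := hne.to_subtype
  rw [infDist_eq_iInf, Real.mul_iInf_of_nonneg (norm_nonneg A)]
  refine le_ciInf fun ⟨y, hy⟩ => ?_
  calc ‖A x - b‖ = ‖A (x - y)‖ := by rw [map_sub, hy]
    _ ≤ ‖A‖ * dist x y := by rw [dist_eq_norm]; exact A.le_opNorm _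

open Finset in
theorem exists_infDist_convexHull_inter_le (V : Finset E) (A : E →L[ℝ] F) (b : F)
    (hne : (convexHull ℝ (V : Set E) ∩ {x | A x = b}).Nonempty) :
    ∃ β, 0 ≤ β ∧ ∀ x ∈ convexHull ℝ (V : Set E),
      infDist x (convexHull ℝ (V : Set E) ∩ {x | A x = b}) ≤ β * ‖A x - b‖ := by
  classical
  set φ : (V → ℝ) →L[ℝ] E :=
    LinearMap.toContinuousLinearMap (Fintype.linearCombination ℝ ((↑) : V → E))
  have hP : convexHull ℝ (V : Set E) = φ '' stdSimplex ℝ V := convexHull_eq_image_stdSimplex V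
  have hK := feasibleSet_prod_sum_eq_stdSimplex_inter (A ∘L φ) b
  set L := (A ∘L φ).prod (∑ v : V, ContinuousLinearMap.proj (R := ℝ) v)
  set S : Finset (((V → ℝ) →L[ℝ] ℝ) × ℝ) :=
    univ.image fun v : V => (-ContinuousLinearMap.proj (R := ℝ) v, (0 : ℝ))
  rw [hP] at hne ⊢
  obtain ⟨_, ⟨l₀, hl₀, rfl⟩, hl₀A⟩ := hne
  obtain ⟨β, hβ, hHoff⟩ := exists_isHoffmanConstant (bounded_stdSimplex V) S L (b, 1)
    ⟨l₀, hK ▸ ⟨hl₀, hl₀A⟩⟩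
  refine ⟨‖φ‖ * β, by positivity, ?_⟩
  rintro _ ⟨l, hl, rfl⟩
  obtain ⟨y, hy, hly⟩ := hHoff l hl ((forall_mem_image_neg_proj_iff l).mpr hl.1)
  rw [hK] at hy
  have hsum : (∑ v : V, ContinuousLinearMap.proj (R := ℝ) v) l = 1 := by simpa using hl.2
  have hres : ‖L l - (b, 1)‖ = ‖A (φ l) - b‖ := by
    rw [ContinuousLinearMap.prod_apply, hsum, Prod.mk_sub_mk, Prod.norm_mk, sub_self, norm_zero,
      max_eq_left (norm_nonneg _)]
    rfl
  have hyQ : φ y ∈ φ '' stdSimplex ℝ V ∩ {x | A x = b} := ⟨Set.mem_image_of_mem φ hy.1, hy.2⟩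
  calc infDist (φ l) _ ≤ dist (φ l) (φ y) := infDist_le_dist_of_mem hyQ
    _ ≤ ‖φ‖ * ‖l - y‖ := by rw [dist_eq_norm, ← map_sub]; exact φ.le_opNorm _
    _ ≤ ‖φ‖ * (β * ‖A (φ l) - b‖) := by rw [← hres]; gcongr
    _ = ‖φ‖ * β * ‖A (φ l) - b‖ := by ring

theorem stmt_9 {d m : ℕ} (V : Finset (EuclideanSpace ℝ (Fin d)))
    (P : Set (EuclideanSpace ℝ (Fin d))) (hP : P = convexHull ℝ (V : Set (EuclideanSpace ℝ (Fin d))))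
    (A : EuclideanSpace ℝ (Fin d) →ₗ[ℝ] EuclideanSpace ℝ (Fin m))
    (b : EuclideanSpace ℝ (Fin m))
    (H : Set (EuclideanSpace ℝ (Fin d))) (hH : H = {x | A x = b})
    (Q : Set (EuclideanSpace ℝ (Fin d))) (hQ : Q = P ∩ H) (hQne : Q.Nonempty) :
    ∃ β : ℝ, 0 ≤ β ∧ ∀ x ∈ P, Metric.infDist x Q ≤ β * Metric.infDist x H := by
  subst hP hH hQ
  set A' := LinearMap.toContinuousLinearMap A
  obtain ⟨β, hβ, hbound⟩ := exists_infDist_convexHull_inter_le V A' b hQne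
  refine ⟨β * ‖A'‖, by positivity, fun x hx => ?_⟩
  calc infDist x _ ≤ β * ‖A' x - b‖ := hbound x hx
    _ ≤ β * (‖A'‖ * infDist x {x | A' x = b}) := by
        gcongr; exact A'.norm_sub_le_mul_infDist (hQne.mono Set.inter_subset_right) x
    _ = β * ‖A'‖ * infDist x {x | A x = b} := (mul_assoc _ _ _).symm
end

section
/- Let P ⊆ ℝ^d be a polytope, A an m×d matrix, b ∈ ℝ^m, with {x ∈ P : Ax = b} nonempty, and let f : ℝ^d → ℝ be convex differentiable with ∇f bounded on P. Let x* minimize f over {x ∈ P : Ax = b}. Then there exists β ≥ 0 such that for all x ∈ P: f(x*) - f(x) ≤ β‖Ax - b‖. -/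
/-!
By convexity, `f xstar - f x ≤ ⟪g, xstar⟫ - ⟪g, x⟫` for `g = ∇f(xstar)`, and first-order
optimality says that `⟪g, xstar⟫ ≤ ⟪g, x⟫` on the feasible set. So it suffices to bound the linear
function `x ↦ ⟪g, xstar⟫ - ⟪g, x⟫` on `P` by `ℓ (A x - b)` for one linear functional `ℓ`, and then
take `β = ‖ℓ‖`. At the vertices of `P` this is a finite system of linear inequalities in `ℓ`,
solvable by Farkas' lemma because the dual certificate would give a feasible point violating
optimality; the bound then passes from the vertices to their convex hull.
-/

open Finset Module RealInnerProductSpace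

section Farkas

variable {M ι : Type*} [AddCommGroup M] [Module ℝ M]

theorem exists_nonneg_sum_smul_cons [DecidableEq ι] {s : Finset ι} {j : ι} (hj : j ∉ s)
    {a : ι → M} {v : M} (hv : ∃ μ : ι → ℝ, (∀ i ∈ s, 0 ≤ μ i) ∧ ∑ i ∈ s, μ i • a i = v)
    {t : ℝ} (ht : 0 ≤ t) :
    ∃ μ : ι → ℝ, (∀ i ∈ s.cons j hj, 0 ≤ μ i) ∧ ∑ i ∈ s.cons j hj, μ i • a i = t • a j + v := by
  obtain ⟨μ, hμ, rfl⟩ := hv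
  refine ⟨Function.update μ j t, ?_, ?_⟩
  · simp only [mem_cons, forall_eq_or_imp, Function.update_self]
    refine ⟨ht, fun i hi => ?_⟩
    rw [Function.update_of_ne (ne_of_mem_of_not_mem hi hj)]
    exact hμ i hi
  · rw [sum_cons, Function.update_self]
    congr 1
    refine sum_congr rfl fun i hi => ?_
    rw [Function.update_of_ne (ne_of_mem_of_not_mem hi hj)]

theorem farkas_alternative [DecidableEq ι] (s : Finset ι) (a : ι → M) (b : M) :
    (∃ μ : ι → ℝ, (∀ i ∈ s, 0 ≤ μ i) ∧ ∑ i ∈ s, μ i • a i = b) ∨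
      ∃ ℓ : Dual ℝ M, (∀ i ∈ s, ℓ (a i) ≤ 0) ∧ 0 < ℓ b := by
  induction s using Finset.cons_induction generalizing a b with
  | empty =>
    by_cases hb : b = 0
    · exact Or.inl ⟨0, by simp, by simp [hb]⟩
    · obtain ⟨ℓ, hℓ⟩ := Projective.exists_dual_eq_one ℝ hb
      exact Or.inr ⟨ℓ, by simp, by simp [hℓ]⟩
  | cons j s hj ih =>
    rcases ih a b with hrep | ⟨ℓ, hℓa, hℓb⟩
    · exact Or.inl (by simpa using exists_nonneg_sum_smul_cons hj hrep le_rfl)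
    by_cases hj' : ℓ (a j) ≤ 0
    · exact Or.inr ⟨ℓ, by simpa [hj'] using hℓa, hℓb⟩
    push Not at hj'
    -- `π` projects along `a j` onto `ker ℓ` and kills `a j`, so the hypothesis on `s` suffices
    set π : M →ₗ[ℝ] M := LinearMap.id - (ℓ (a j))⁻¹ • ℓ.smulRight (a j) with hπ
    have hπ_apply : ∀ v, v = π v + (ℓ v / ℓ (a j)) • a j := fun v => by
      simp [hπ, div_eq_inv_mul, mul_smul]
    have hπ_aj : π (a j) = 0 := by
      simp [hπ, smul_smul, inv_mul_cancel₀ hj'.ne']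
    rcases ih (π ∘ a) (π b) with ⟨μ, hμ, hsum⟩ | ⟨ℓ', hℓ'a, hℓ'b⟩
    · set w := ∑ i ∈ s, μ i • a i with hw
      have hπw : π w = π b := by simpa [hw, map_sum] using hsum
      have hℓw : ℓ w ≤ 0 := by
        simp only [hw, map_sum, map_smul, smul_eq_mul]
        exact sum_nonpos fun i hi => mul_nonpos_of_nonneg_of_nonpos (hμ i hi) (hℓa i hi)
      have ht : 0 ≤ (ℓ b - ℓ w) / ℓ (a j) := div_nonneg (by linarith) hj'.le
      have hb : ((ℓ b - ℓ w) / ℓ (a j)) • a j + w = b := by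
        linear_combination (norm := module) hπ_apply w - hπ_apply b + hπw
      exact Or.inl (hb ▸ exists_nonneg_sum_smul_cons hj ⟨μ, hμ, rfl⟩ ht)
    · refine Or.inr ⟨ℓ'.comp π, ?_, by simpa using hℓ'b⟩
      simp only [mem_cons, forall_eq_or_imp, LinearMap.comp_apply, hπ_aj, map_zero, le_refl,
        true_and]
      exact hℓ'a

theorem exists_dual_ge_of_forall_sum_mul_nonpos [DecidableEq ι] (s : Finset ι) (a : ι → M)
    (c : ι → ℝ)
    (h : ∀ μ : ι → ℝ, (∀ i ∈ s, 0 ≤ μ i) → ∑ i ∈ s, μ i • a i = 0 → ∑ i ∈ s, μ i * c i ≤ 0) :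
    ∃ ℓ : Dual ℝ M, ∀ i ∈ s, c i ≤ ℓ (a i) := by
  rcases farkas_alternative s (fun i => (a i, c i)) ((0 : M), (1 : ℝ)) with
    ⟨μ, hμ, hsum⟩ | ⟨L, hLa, hLb⟩
  · have ha : ∑ i ∈ s, μ i • a i = 0 := by simpa [Prod.fst_sum] using congrArg Prod.fst hsum
    have hc : ∑ i ∈ s, μ i * c i = 1 := by simpa [Prod.snd_sum] using congrArg Prod.snd hsum
    linarith [h μ hμ ha]
  · refine ⟨-(L (0, 1))⁻¹ • L.comp (LinearMap.inl ℝ M ℝ), fun i hi => ?_⟩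
    have hsplit : L (a i, c i) = L (a i, 0) + c i * L (0, 1) := by
      rw [← smul_eq_mul, ← map_smul, ← map_add]
      simp
    have := hLa i hi
    simp only [LinearMap.smul_apply, LinearMap.comp_apply, LinearMap.inl_apply, smul_eq_mul,
      neg_mul, inv_mul_eq_div, ← neg_div, le_div_iff₀ hLb]
    linarith

end Farkas

section ConvexHull

variable {E F : Type*} [AddCommGroup E] [Module ℝ E] [AddCommGroup F] [Module ℝ F]
  {V : Finset E} {L : E →ₗ[ℝ] ℝ} {A : E →ₗ[ℝ] F} {b : F} {c : ℝ}

theorem sum_mul_sub_nonpos_of_le_on_convexHull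
    (h : ∀ x ∈ convexHull ℝ (V : Set E), A x = b → c ≤ L x) {μ : E → ℝ}
    (hμ : ∀ v ∈ V, 0 ≤ μ v) (hsum : ∑ v ∈ V, μ v • (A v - b) = 0) :
    ∑ v ∈ V, μ v * (c - L v) ≤ 0 := by
  have hA : ∑ v ∈ V, μ v • A v = (∑ v ∈ V, μ v) • b := by
    simpa [smul_sub, sum_sub_distrib, ← sum_smul, sub_eq_zero] using hsum
  simp only [mul_sub, sum_sub_distrib, ← sum_mul, sub_nonpos]
  rcases (sum_nonneg hμ).eq_or_lt with hT | hT
  · have hμ0 := (sum_eq_zero_iff_of_nonneg hμ).1 hT.symm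
    rw [← hT, zero_mul, sum_eq_zero fun v hv => by rw [hμ0 v hv, zero_mul]]
  have hx := V.centerMass_mem_convexHull hμ hT fun v hv => hv
  have hAx : A (V.centerMass μ id) = b := by
    simp [centerMass, hA, smul_smul, inv_mul_cancel₀ hT.ne']
  have hLx := h _ hx hAx
  simp only [centerMass, map_smul, map_sum, smul_eq_mul] at hLx
  rw [le_inv_mul_iff₀ hT] at hLx
  linarith

theorem exists_dual_sub_le_of_le_on_convexHull
    (h : ∀ x ∈ convexHull ℝ (V : Set E), A x = b → c ≤ L x) :
    ∃ ℓ : Dual ℝ F, ∀ x ∈ convexHull ℝ (V : Set E), c - L x ≤ ℓ (A x - b) := by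
  classical
  obtain ⟨ℓ, hℓ⟩ := exists_dual_ge_of_forall_sum_mul_nonpos V (fun v => A v - b)
    (fun v => c - L v) fun μ hμ hsum => sum_mul_sub_nonpos_of_le_on_convexHull h hμ hsum
  have hhalf : {x | c - L x ≤ ℓ (A x - b)} = {x | c + ℓ b ≤ (L + ℓ ∘ₗ A) x} := by
    ext x
    simp only [Set.mem_ofPred_eq, map_sub, LinearMap.add_apply, LinearMap.comp_apply]
    constructor <;> intro <;> linarith
  have hconv : Convex ℝ {x | c - L x ≤ ℓ (A x - b)} :=
    hhalf ▸ convex_halfSpace_ge (L + ℓ ∘ₗ A).isLinear _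
  exact ⟨ℓ, convexHull_min (fun v hv => hℓ v hv) hconv⟩

end ConvexHull

section Calculus

variable {E : Type*} [NormedAddCommGroup E] [NormedSpace ℝ E] {f : E → ℝ} {f' : E →L[ℝ] ℝ}
  {s : Set E} {x y : E}

theorem ConvexOn.le_sub_of_hasFDerivAt (hf : ConvexOn ℝ s f) (hx : x ∈ s) (hy : y ∈ s)
    (hf' : HasFDerivAt f f' x) : f' (y - x) ≤ f y - f x := by
  have hline := hf.comp_affineMap (AffineMap.lineMap (k := ℝ) x y)
  have hderiv : HasDerivAt (f ∘ AffineMap.lineMap (k := ℝ) x y) (f' (y - x)) 0 := by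
    refine HasFDerivAt.comp_hasDerivAt (0 : ℝ) ?_ AffineMap.hasDerivAt_lineMap
    simpa using hf'
  simpa [slope] using
    hline.le_slope_of_hasDerivAt (by simpa using hx) (by simpa using hy) zero_lt_one hderiv

theorem IsMinOn.hasFDerivAt_apply_sub_nonneg (h : IsMinOn f s x) (hs : Convex ℝ s)
    (hf' : HasFDerivAt f f' x) (hx : x ∈ s) (hy : y ∈ s) : 0 ≤ f' (y - x) :=
  h.localize.hasFDerivWithinAt_nonneg hf'.hasFDerivWithinAt
    (sub_mem_posTangentConeAt_of_segment_subset (hs.segment_subset hx hy))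

end Calculus

theorem stmt_10_general {d m : ℕ} (V : Finset (EuclideanSpace ℝ (Fin d)))
    (P : Set (EuclideanSpace ℝ (Fin d))) (hP : P = convexHull ℝ (V : Set (EuclideanSpace ℝ (Fin d))))
    (A : EuclideanSpace ℝ (Fin d) →ₗ[ℝ] EuclideanSpace ℝ (Fin m))
    (b : EuclideanSpace ℝ (Fin m))
    (f : EuclideanSpace ℝ (Fin d) → ℝ)
    (f' : EuclideanSpace ℝ (Fin d) → EuclideanSpace ℝ (Fin d))
    (hconv : ConvexOn ℝ Set.univ f)
    (hgrad : ∀ x, HasGradientAt f (f' x) x)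
    (xstar : EuclideanSpace ℝ (Fin d)) (hxstar : xstar ∈ P ∧ A xstar = b)
    (hopt : ∀ x ∈ P, A x = b → f xstar ≤ f x) :
    ∃ β : ℝ, 0 ≤ β ∧ ∀ x ∈ P, f xstar - f x ≤ β * ‖A x - b‖ := by
  subst hP
  set g := f' xstar
  have hfderiv := (hgrad xstar).hasFDerivAt
  have hfeasible : Convex ℝ {x ∈ convexHull ℝ (V : Set _) | A x = b} :=
    (convex_convexHull ℝ _).inter ((convex_singleton b).linear_preimage A)
  have hfirstOrder : ∀ x ∈ convexHull ℝ (V : Set _), A x = b → ⟪g, xstar⟫ ≤ ⟪g, x⟫ :=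
    fun x hx hAx => by
      have := IsMinOn.hasFDerivAt_apply_sub_nonneg (fun y hy => hopt y hy.1 hy.2) hfeasible
        hfderiv hxstar ⟨hx, hAx⟩
      simpa [inner_sub_right] using this
  obtain ⟨ℓ, hℓ⟩ := exists_dual_sub_le_of_le_on_convexHull (L := innerₛₗ ℝ g) hfirstOrder
  refine ⟨‖LinearMap.toContinuousLinearMap ℓ‖, norm_nonneg _, fun x hx => ?_⟩
  calc f xstar - f x ≤ ⟪g, xstar⟫ - ⟪g, x⟫ := by
        have := hconv.le_sub_of_hasFDerivAt trivial trivial hfderiv (y := x)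
        simp only [InnerProductSpace.toDual_apply_apply, inner_sub_right] at this
        linarith
    _ ≤ ℓ (A x - b) := hℓ x hx
    _ ≤ ‖LinearMap.toContinuousLinearMap ℓ‖ * ‖A x - b‖ :=
        (Real.le_norm_self _).trans ((LinearMap.toContinuousLinearMap ℓ).le_opNorm _)

theorem stmt_10 {d m : ℕ} (V : Finset (EuclideanSpace ℝ (Fin d)))
    (P : Set (EuclideanSpace ℝ (Fin d))) (hP : P = convexHull ℝ (V : Set (EuclideanSpace ℝ (Fin d))))
    (A : EuclideanSpace ℝ (Fin d) →ₗ[ℝ] EuclideanSpace ℝ (Fin m))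
    (b : EuclideanSpace ℝ (Fin m))
    (hfeas : {x ∈ P | A x = b}.Nonempty)
    (f : EuclideanSpace ℝ (Fin d) → ℝ)
    (f' : EuclideanSpace ℝ (Fin d) → EuclideanSpace ℝ (Fin d))
    (hconv : ConvexOn ℝ Set.univ f)
    (hgrad : ∀ x, HasGradientAt f (f' x) x)
    (hbdd : ∃ M : ℝ, ∀ x ∈ P, ‖f' x‖ ≤ M)
    (xstar : EuclideanSpace ℝ (Fin d)) (hxstar : xstar ∈ P ∧ A xstar = b)
    (hopt : ∀ x ∈ P, A x = b → f xstar ≤ f x) :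
    ∃ β : ℝ, 0 ≤ β ∧ ∀ x ∈ P, f xstar - f x ≤ β * ‖A x - b‖ :=
  stmt_10_general V P hP A b f f' hconv hgrad xstar hxstar hopt
end
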